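/- Let X be a real vector space with two norms ‖·‖₁ and ‖·‖₂, and α, β ∈ [0,1) with 0 < α+β < 1. Then ‖·‖₁ and ‖·‖₂ are equivalent if and only if there exists a constant k > 0 such that |ρ_{α,β,1}(u,v) − ρ_{α,β,2}(u,v)| < k · min{‖u‖₁‖v‖₁, ‖u‖₂‖v‖₂} for all nonzero u, v ∈ X, where ρ_{α,β,c} denotes the ρ_{α,β}-functional with respect to ‖·‖_c. -/

import Mathlib

/-- Right norm derivative with respect to an abstract norm function `n`. -/
noncomputable def rhoPF {X : Type*} [AddCommGroup X] [Module ℝ X] (n : X → ℝ) (u v : X) : ℝ :=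
  Filter.limUnder (nhdsWithin (0:ℝ) (Set.Ioi 0)) (fun t : ℝ => ((n (u + t • v))^2 - (n u)^2) / (2*t))

/-- Left norm derivative with respect to an abstract norm function `n`. -/
noncomputable def rhoMF {X : Type*} [AddCommGroup X] [Module ℝ X] (n : X → ℝ) (u v : X) : ℝ :=
  Filter.limUnder (nhdsWithin (0:ℝ) (Set.Iio 0)) (fun t : ℝ => ((n (u + t • v))^2 - (n u)^2) / (2*t))

noncomputable def rhoABF {X : Type*} [AddCommGroup X] [Module ℝ X]
    (n : X → ℝ) (α β : ℝ) (u v : X) : ℝ := α * rhoMF n u v + β * rhoPF n u v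

/-- `n` is a norm on the real vector space `X`. -/
def IsNormFn {X : Type*} [AddCommGroup X] [Module ℝ X] (n : X → ℝ) : Prop :=
  (∀ x, 0 ≤ n x) ∧ (∀ x, n x = 0 ↔ x = 0) ∧
  (∀ (c : ℝ) (x : X), n (c • x) = |c| * n x) ∧ (∀ x y, n (x + y) ≤ n x + n y)

/-!
Both one-sided derivatives exist because `t ↦ ‖u + t v‖²` is convex, and its difference
quotients are bounded by `‖u‖‖v‖ + |t|‖v‖²/2`, so `|ρ_{α,β}(u,v)| ≤ (α+β)‖u‖‖v‖ < ‖u‖‖v‖`.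
If the norms are equivalent, `|ρ₁ - ρ₂| < ‖u‖₁‖v‖₁ + ‖u‖₂‖v‖₂`, and each product is controlled
by the other. Conversely, `ρ_{α,β}(u,u) = (α+β)‖u‖²`, so taking `v = u` in the hypothesis gives
`(α+β)|‖u‖₁² - ‖u‖₂²| < k min(‖u‖₁², ‖u‖₂²)`, i.e. each norm is at most `√(1 + k/(α+β))` times
the other.
-/

open Filter Set Topology

namespace IsNormFn

variable {X : Type*} [AddCommGroup X] [Module ℝ X] {n : X → ℝ}

lemma nonneg (h : IsNormFn n) (x : X) : 0 ≤ n x := h.1 x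

lemma pos (h : IsNormFn n) {x : X} (hx : x ≠ 0) : 0 < n x :=
  (h.nonneg x).lt_of_ne fun e => hx ((h.2.1 x).1 e.symm)

lemma map_zero (h : IsNormFn n) : n 0 = 0 := (h.2.1 0).2 rfl

lemma map_smul (h : IsNormFn n) (c : ℝ) (x : X) : n (c • x) = |c| * n x := h.2.2.1 c x

lemma add_le (h : IsNormFn n) (x y : X) : n (x + y) ≤ n x + n y := h.2.2.2 x y

lemma abs_sub_le (h : IsNormFn n) (x y : X) : |n (x + y) - n x| ≤ n y := by
  have hneg : n (-y) = n y := by rw [← neg_one_smul ℝ y, h.map_smul, abs_neg, abs_one, one_mul]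
  have := h.add_le (x + y) (-y)
  rw [add_neg_cancel_right, hneg] at this
  exact abs_sub_le_iff.2 ⟨by linarith [h.add_le x y], by linarith⟩

lemma mul_le_sq_mul {n' : X → ℝ} (h : IsNormFn n') {C : ℝ} (hC : ∀ x, n' x ≤ C * n x)
    (u v : X) : n' u * n' v ≤ C ^ 2 * (n u * n v) :=
  calc n' u * n' v ≤ (C * n u) * (C * n v) :=
        mul_le_mul (hC u) (hC v) (h.nonneg v) ((h.nonneg u).trans (hC u))
    _ = C ^ 2 * (n u * n v) := by ring

lemma convexOn_line (h : IsNormFn n) (u v : X) :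
    ConvexOn ℝ univ fun t : ℝ => n (u + t • v) := by
  refine ⟨convex_univ, fun a _ b _ la lb hla hlb hlab => ?_⟩
  have hcomb : u + (la • a + lb • b) • v = la • (u + a • v) + lb • (u + b • v) := by
    rw [smul_add, smul_add, smul_smul, smul_smul, add_smul, smul_eq_mul, smul_eq_mul]
    nth_rewrite 1 [← one_smul ℝ u, ← hlab, add_smul]
    abel
  calc n (u + (la • a + lb • b) • v)
      ≤ n (la • (u + a • v)) + n (lb • (u + b • v)) := hcomb ▸ h.add_le _ _
    _ = la • n (u + a • v) + lb • n (u + b • v) := by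
      rw [h.map_smul, h.map_smul, abs_of_nonneg hla, abs_of_nonneg hlb, smul_eq_mul, smul_eq_mul]

lemma convexOn_sq_line (h : IsNormFn n) (u v : X) :
    ConvexOn ℝ univ fun t : ℝ => n (u + t • v) ^ 2 :=
  (h.convexOn_line u v).pow (fun _ _ => h.nonneg _) 2

end IsNormFn

section NormDerivative

variable {X : Type*} [AddCommGroup X] [Module ℝ X] {n : X → ℝ}

noncomputable def normSqDiffQuot (n : X → ℝ) (u v : X) (t : ℝ) : ℝ :=
  (n (u + t • v) ^ 2 - n u ^ 2) / (2 * t)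

lemma normSqDiffQuot_eq_slope (n : X → ℝ) (u v : X) (t : ℝ) :
    normSqDiffQuot n u v t = slope (fun s : ℝ => n (u + s • v) ^ 2) 0 t / 2 := by
  rw [normSqDiffQuot, slope_def_field, zero_smul, add_zero, sub_zero, div_div, mul_comm t]

lemma abs_normSqDiffQuot_le (h : IsNormFn n) (u v : X) (t : ℝ) :
    |normSqDiffQuot n u v t| ≤ n u * n v + |t| * n v ^ 2 / 2 := by
  rcases eq_or_ne t 0 with rfl | ht
  · simpa [normSqDiffQuot] using mul_nonneg (h.nonneg u) (h.nonneg v)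
  have hdiff : |n (u + t • v) - n u| ≤ |t| * n v := h.map_smul t v ▸ h.abs_sub_le u (t • v)
  have hsum : n (u + t • v) + n u ≤ 2 * n u + |t| * n v := by
    linarith [h.add_le u (t • v), h.map_smul t v]
  have hsq : |n (u + t • v) ^ 2 - n u ^ 2| ≤ (|t| * n v) * (2 * n u + |t| * n v) := by
    rw [sq_sub_sq, abs_mul, abs_of_nonneg (add_nonneg (h.nonneg _) (h.nonneg u)), mul_comm]
    exact mul_le_mul hdiff hsum (by linarith [h.nonneg (u + t • v), h.nonneg u])
      (mul_nonneg (abs_nonneg t) (h.nonneg v))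
  rw [normSqDiffQuot, abs_div, abs_mul, abs_two, div_le_iff₀ (by positivity)]
  linarith

lemma tendsto_normSqDiffQuot_nhdsGT (h : IsNormFn n) (u v : X) :
    Tendsto (normSqDiffQuot n u v) (𝓝[>] 0) (𝓝 (rhoPF n u v)) := by
  have hderiv := (h.convexOn_sq_line u v).differentiableWithinAt_Ioi_of_mem_interior
    (by simp : (0 : ℝ) ∈ interior univ) |>.hasDerivWithinAt
  rw [hasDerivWithinAt_iff_tendsto_slope' self_notMem_Ioi] at hderiv
  have hlim := hderiv.div_const 2
  simp_rw [← normSqDiffQuot_eq_slope] at hlim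
  rwa [show rhoPF n u v = _ from hlim.limUnder_eq]

lemma tendsto_normSqDiffQuot_nhdsLT (h : IsNormFn n) (u v : X) :
    Tendsto (normSqDiffQuot n u v) (𝓝[<] 0) (𝓝 (rhoMF n u v)) := by
  have hderiv := (h.convexOn_sq_line u v).differentiableWithinAt_Iio_of_mem_interior
    (by simp : (0 : ℝ) ∈ interior univ) |>.hasDerivWithinAt
  rw [hasDerivWithinAt_iff_tendsto_slope' self_notMem_Iio] at hderiv
  have hlim := hderiv.div_const 2
  simp_rw [← normSqDiffQuot_eq_slope] at hlim
  rwa [show rhoMF n u v = _ from hlim.limUnder_eq]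

lemma abs_le_of_tendsto_normSqDiffQuot (h : IsNormFn n) {u v : X} {l : Filter ℝ} [l.NeBot]
    (hl : l ≤ 𝓝 0) {L : ℝ} (hL : Tendsto (normSqDiffQuot n u v) l (𝓝 L)) :
    |L| ≤ n u * n v := by
  have hbound : Tendsto (fun t : ℝ => n u * n v + |t| * n v ^ 2 / 2) l (𝓝 (n u * n v)) := by
    have hcont : Continuous fun t : ℝ => n u * n v + |t| * n v ^ 2 / 2 := by fun_prop
    simpa using (hcont.tendsto 0).mono_left hl
  exact le_of_tendsto_of_tendsto' hL.abs hbound (abs_normSqDiffQuot_le h u v)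

lemma abs_rhoPF_le (h : IsNormFn n) (u v : X) : |rhoPF n u v| ≤ n u * n v :=
  abs_le_of_tendsto_normSqDiffQuot h nhdsWithin_le_nhds (tendsto_normSqDiffQuot_nhdsGT h u v)

lemma abs_rhoMF_le (h : IsNormFn n) (u v : X) : |rhoMF n u v| ≤ n u * n v :=
  abs_le_of_tendsto_normSqDiffQuot h nhdsWithin_le_nhds (tendsto_normSqDiffQuot_nhdsLT h u v)

lemma normSqDiffQuot_self (h : IsNormFn n) (u : X) {t : ℝ} (ht : t ≠ 0) :
    normSqDiffQuot n u u t = (1 + t / 2) * n u ^ 2 := by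
  rw [normSqDiffQuot, show u + t • u = (1 + t) • u by rw [add_smul, one_smul], h.map_smul,
    mul_pow, sq_abs]
  field_simp
  ring

lemma tendsto_normSqDiffQuot_self (h : IsNormFn n) (u : X) :
    Tendsto (normSqDiffQuot n u u) (𝓝[≠] 0) (𝓝 (n u ^ 2)) := by
  have hcont : Continuous fun t : ℝ => (1 + t / 2) * n u ^ 2 := by fun_prop
  have hlim : Tendsto (fun t : ℝ => (1 + t / 2) * n u ^ 2) (𝓝[≠] 0) (𝓝 (n u ^ 2)) := by
    simpa using (hcont.tendsto 0).mono_left nhdsWithin_le_nhds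
  refine hlim.congr' ?_
  filter_upwards [self_mem_nhdsWithin] with t ht using (normSqDiffQuot_self h u ht).symm

lemma rhoPF_self (h : IsNormFn n) (u : X) : rhoPF n u u = n u ^ 2 :=
  tendsto_nhds_unique (tendsto_normSqDiffQuot_nhdsGT h u u)
    ((tendsto_normSqDiffQuot_self h u).mono_left (nhdsGT_le_nhdsNE 0))

lemma rhoMF_self (h : IsNormFn n) (u : X) : rhoMF n u u = n u ^ 2 :=
  tendsto_nhds_unique (tendsto_normSqDiffQuot_nhdsLT h u u)
    ((tendsto_normSqDiffQuot_self h u).mono_left (nhdsLT_le_nhdsNE 0))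

lemma rhoABF_self (h : IsNormFn n) (α β : ℝ) (u : X) :
    rhoABF n α β u u = (α + β) * n u ^ 2 := by
  rw [rhoABF, rhoMF_self h, rhoPF_self h]
  ring

lemma abs_rhoABF_le (h : IsNormFn n) {α β : ℝ} (hα : 0 ≤ α) (hβ : 0 ≤ β) (u v : X) :
    |rhoABF n α β u v| ≤ (α + β) * (n u * n v) :=
  calc |rhoABF n α β u v| ≤ |α * rhoMF n u v| + |β * rhoPF n u v| := abs_add_le _ _
    _ = α * |rhoMF n u v| + β * |rhoPF n u v| := by
      rw [abs_mul, abs_mul, abs_of_nonneg hα, abs_of_nonneg hβ]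
    _ ≤ α * (n u * n v) + β * (n u * n v) := by
      gcongr
      exacts [abs_rhoMF_le h u v, abs_rhoPF_le h u v]
    _ = (α + β) * (n u * n v) := by ring

lemma abs_rhoABF_lt (h : IsNormFn n) {α β : ℝ} (hα : 0 ≤ α) (hβ : 0 ≤ β) (hαβ : α + β < 1)
    {u v : X} (hu : u ≠ 0) (hv : v ≠ 0) : |rhoABF n α β u v| < n u * n v :=
  (abs_rhoABF_le h hα hβ u v).trans_lt
    (mul_lt_of_lt_one_left (mul_pos (h.pos hu) (h.pos hv)) hαβ)

end NormDerivative

lemma add_le_one_add_add_mul_min {p q A B : ℝ} (hp : 0 ≤ p) (hq : 0 ≤ q) (hA : 0 ≤ A)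
    (hB : 0 ≤ B) (hpq : p ≤ A * q) (hqp : q ≤ B * p) : p + q ≤ (1 + A + B) * min p q := by
  rcases le_total p q with hle | hle
  · rw [min_eq_left hle]
    nlinarith [mul_nonneg hA hp]
  · rw [min_eq_right hle]
    nlinarith [mul_nonneg hB hq]

lemma le_sqrt_mul_of_abs_sub_lt {a k x y : ℝ} (ha : 0 < a) (hk : 0 ≤ k) (hx : 0 ≤ x)
    (hy : 0 ≤ y) (h : |a * x ^ 2 - a * y ^ 2| < k * min (x * x) (y * y)) :
    x ≤ √(1 + k / a) * y := by
  have hsq : x ^ 2 ≤ (1 + k / a) * y ^ 2 := by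
    have hmin : k * min (x * x) (y * y) ≤ k * y ^ 2 := by
      rw [sq]
      exact mul_le_mul_of_nonneg_left (min_le_right _ _) hk
    have hexp : a * ((1 + k / a) * y ^ 2) = a * y ^ 2 + k * y ^ 2 := by
      field_simp
    refine le_of_mul_le_mul_left ?_ ha
    linarith [(abs_lt.1 h).2]
  calc x = √(x ^ 2) := (Real.sqrt_sq hx).symm
    _ ≤ √((1 + k / a) * y ^ 2) := Real.sqrt_le_sqrt hsq
    _ = √(1 + k / a) * y := by rw [Real.sqrt_mul' _ (sq_nonneg y), Real.sqrt_sq hy]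

theorem stmt_10 {X : Type*} [AddCommGroup X] [Module ℝ X]
    (n₁ n₂ : X → ℝ) (h₁ : IsNormFn n₁) (h₂ : IsNormFn n₂)
    (α β : ℝ) (hα : α ∈ Set.Ico (0:ℝ) 1) (hβ : β ∈ Set.Ico (0:ℝ) 1)
    (hab : 0 < α + β) (hab1 : α + β < 1) :
    (∃ m M : ℝ, 0 < m ∧ 0 < M ∧ ∀ u : X, m * n₁ u ≤ n₂ u ∧ n₂ u ≤ M * n₁ u) ↔
    (∃ k : ℝ, 0 < k ∧ ∀ u v : X, u ≠ 0 → v ≠ 0 →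
      |rhoABF n₁ α β u v - rhoABF n₂ α β u v| < k * min (n₁ u * n₁ v) (n₂ u * n₂ v)) := by
  constructor
  · rintro ⟨m, M, hm, hM, hmM⟩
    refine ⟨1 + (m⁻¹) ^ 2 + M ^ 2, by positivity, fun u v hu hv => ?_⟩
    have h₁₂ := h₁.mul_le_sq_mul (fun x => (le_inv_mul_iff₀ hm).2 (hmM x).1) u v
    have h₂₁ := h₂.mul_le_sq_mul (fun x => (hmM x).2) u v
    calc |rhoABF n₁ α β u v - rhoABF n₂ α β u v|
        ≤ |rhoABF n₁ α β u v| + |rhoABF n₂ α β u v| := abs_sub _ _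
      _ < n₁ u * n₁ v + n₂ u * n₂ v :=
        add_lt_add (abs_rhoABF_lt h₁ hα.1 hβ.1 hab1 hu hv) (abs_rhoABF_lt h₂ hα.1 hβ.1 hab1 hu hv)
      _ ≤ _ := add_le_one_add_add_mul_min (mul_nonneg (h₁.nonneg u) (h₁.nonneg v))
        (mul_nonneg (h₂.nonneg u) (h₂.nonneg v)) (sq_nonneg _) (sq_nonneg _) h₁₂ h₂₁
  · rintro ⟨k, hk, hρ⟩
    set K := √(1 + k / (α + β))
    have hK : 0 < K := Real.sqrt_pos.2 (by positivity)
    have hcompare : ∀ u, n₂ u ≤ K * n₁ u ∧ n₁ u ≤ K * n₂ u := by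
      intro u
      rcases eq_or_ne u 0 with rfl | hu
      · simp [h₁.map_zero, h₂.map_zero]
      have hdiag := hρ u u hu hu
      rw [rhoABF_self h₁, rhoABF_self h₂] at hdiag
      exact ⟨le_sqrt_mul_of_abs_sub_lt hab hk.le (h₂.nonneg u) (h₁.nonneg u)
          (by rwa [abs_sub_comm, min_comm]),
        le_sqrt_mul_of_abs_sub_lt hab hk.le (h₁.nonneg u) (h₂.nonneg u) hdiag⟩
    exact ⟨K⁻¹, K, inv_pos.2 hK, hK,
      fun u => ⟨(inv_mul_le_iff₀ hK).2 (hcompare u).2, (hcompare u).1⟩⟩
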